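/- Free groups are Howson: if H1 and H2 are finitely generated subgroups of a free group F, then the intersection H1 ∩ H2 is finitely generated. -/

import Mathlib

/-!
For `H ≤ FreeGroup α`, look at the cosets `s H` of the suffixes `s` of reduced words of elements
of `H` (the vertices of the Stallings graph of `H`) and at the letters occurring in these words.
If both sets are finite, the Schreier elements `ρ(x c)⁻¹ x ρ(c)` for a coset `c`, a letter `x`
and a choice of representatives `ρ` generate `H`. Conversely, a suffix of a reduced product of
generators is a suffix of one generator times an element of `H`, so a finitely generated `H` has
finitely many such cosets and letters. For `H ⊓ K` the coset `s (H ⊓ K)` is determined by the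
pair `(s H, s K)`, so both finiteness conditions pass to the intersection.
-/

open Subgroup

theorem Subgroup.FG.map {G N : Type*} [Group G] [Group N] {H : Subgroup G} (h : H.FG)
    (f : G →* N) : (H.map f).FG := by
  classical
  obtain ⟨S, rfl⟩ := h
  exact ⟨S.image f, by rw [Finset.coe_image, MonoidHom.map_closure]⟩

theorem QuotientGroup.exists_section_map_one {G : Type*} [Group G] (H : Subgroup G) :
    ∃ ρ : G ⧸ H → G, (∀ c, (ρ c : G ⧸ H) = c) ∧ ρ (1 : G) = 1 := by
  set r := ((1 : G) : G ⧸ H).out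
  have hr : r ∈ H := by
    simpa using QuotientGroup.eq.mp (QuotientGroup.out_eq' ((1 : G) : G ⧸ H)).symm
  refine ⟨fun c => c.out * r⁻¹, fun c => ?_, mul_inv_cancel r⟩
  rw [QuotientGroup.mk_mul_of_mem _ (H.inv_mem hr), QuotientGroup.out_eq']

theorem Subgroup.quotientMapOfLE_inf_injective {G : Type*} [Group G] (H K : Subgroup G) :
    Function.Injective fun c : G ⧸ (H ⊓ K) =>
      (quotientMapOfLE inf_le_left c, quotientMapOfLE inf_le_right c) := by
  rintro ⟨a⟩ ⟨b⟩ h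
  simp only [Prod.mk.injEq] at h
  exact QuotientGroup.eq.mpr ⟨QuotientGroup.eq.mp h.1, QuotientGroup.eq.mp h.2⟩

namespace FreeGroup

variable {α : Type*} [DecidableEq α]

theorem suffix_toWord_mk_singleton_mul {x : α × Bool} {c : FreeGroup α} {s : List (α × Bool)}
    (hs : s <:+ (mk [x] * c).toWord) : s <:+ c.toWord ∨ mk s = mk [x] * c := by
  have hword : (mk [x] * c).toWord = reduce (x :: c.toWord) := by
    rw [toWord_mul, toWord_mk, reduce_singleton]; rfl
  by_cases hwhole : s = (mk [x] * c).toWord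
  · exact Or.inr (hwhole ▸ mk_toWord)
  left
  rw [hword, reduce.cons, reduce_toWord] at hs hwhole
  rcases hc : c.toWord with _ | ⟨y, t⟩ <;> rw [hc] at hs hwhole <;> dsimp only at hs hwhole
  · exact (List.suffix_cons_iff.mp hs).resolve_left hwhole
  · split_ifs at hs hwhole
    · exact hs.trans (List.suffix_cons y t)
    · exact (List.suffix_cons_iff.mp hs).resolve_left hwhole

theorem suffix_toWord_mul {a b : FreeGroup α} {s : List (α × Bool)}
    (hs : s <:+ (a * b).toWord) : s <:+ b.toWord ∨ ∃ q, q <:+ a.toWord ∧ mk s = mk q * b := by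
  suffices ∀ L s, s <:+ (mk L * b).toWord → s <:+ b.toWord ∨ ∃ q, q <:+ L ∧ mk s = mk q * b by
    exact this a.toWord s (by rwa [mk_toWord])
  intro L
  induction L with
  | nil => intro s hs; exact Or.inl (by simpa [← one_eq_mk] using hs)
  | cons x t ih =>
    intro s hs
    have hsplit : mk (x :: t) * b = mk [x] * (mk t * b) := by rw [← mul_assoc, mul_mk]; rfl
    rw [hsplit] at hs
    rcases suffix_toWord_mk_singleton_mul hs with hs | hs
    · exact (ih s hs).imp_right fun ⟨q, hq, hqs⟩ => ⟨q, hq.trans (List.suffix_cons x t), hqs⟩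
    · exact Or.inr ⟨x :: t, List.suffix_refl _, hs.trans hsplit.symm⟩

def suffixes (T : Set (FreeGroup α)) : Set (List (α × Bool)) :=
  {s | ∃ w ∈ T, s <:+ w.toWord}

def letters (T : Set (FreeGroup α)) : Set (α × Bool) :=
  {x | ∃ w ∈ T, x ∈ w.toWord}

def suffixCosets (H : Subgroup (FreeGroup α)) (T : Set (FreeGroup α)) : Set (FreeGroup α ⧸ H) :=
  (fun s => ((mk s : FreeGroup α) : FreeGroup α ⧸ H)) '' suffixes T

theorem finite_suffixCosets (H : Subgroup (FreeGroup α)) {T : Set (FreeGroup α)} (hT : T.Finite) :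
    (suffixCosets H T).Finite := by
  refine Set.Finite.image _ <| (hT.biUnion fun w _ => w.toWord.tails.finite_toSet).subset ?_
  rintro s ⟨w, hw, hs⟩
  exact Set.mem_biUnion hw ((List.mem_tails _ _).mpr hs)

theorem finite_letters {T : Set (FreeGroup α)} (hT : T.Finite) : (letters T).Finite := by
  refine (hT.biUnion fun w _ => w.toWord.finite_toSet).subset ?_
  rintro x ⟨w, hw, hx⟩
  exact Set.mem_biUnion hw hx

theorem letters_closure_subset (S : Set (FreeGroup α)) :
    letters (closure S) ⊆ letters (S ∪ S⁻¹) := by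
  rintro x ⟨w, hw, hx⟩
  induction hw using closure_induction_right generalizing x with
  | one => simp at hx
  | mul_right a _ b hb ih =>
    rcases List.mem_append.mp ((toWord_mul_sublist a b).subset hx) with hx | hx
    exacts [ih hx, ⟨b, Or.inl hb, hx⟩]
  | mul_inv_cancel a _ b hb ih =>
    rcases List.mem_append.mp ((toWord_mul_sublist a b⁻¹).subset hx) with hx | hx
    exacts [ih hx, ⟨b⁻¹, Or.inr (Set.inv_mem_inv.mpr hb), hx⟩]

theorem suffixCosets_closure_subset (S : Set (FreeGroup α)) :
    suffixCosets (closure S) (closure S) ⊆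
      insert ((1 : FreeGroup α) : FreeGroup α ⧸ closure S) (suffixCosets (closure S) (S ∪ S⁻¹)) := by
  set Q := insert ((1 : FreeGroup α) : FreeGroup α ⧸ closure S) (suffixCosets (closure S) (S ∪ S⁻¹))
  have step (a b : FreeGroup α) (hb : b ∈ S ∪ S⁻¹)
      (ih : ∀ s, s <:+ a.toWord → ((mk s : FreeGroup α) : FreeGroup α ⧸ closure S) ∈ Q)
      (s : List (α × Bool)) (hs : s <:+ (a * b).toWord) :
      ((mk s : FreeGroup α) : FreeGroup α ⧸ closure S) ∈ Q := by
    rcases suffix_toWord_mul hs with hs | ⟨q, hq, hqs⟩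
    · exact Or.inr ⟨s, ⟨b, hb, hs⟩, rfl⟩
    · have hbS : b ∈ closure S := by
        rcases hb with hb | hb
        exacts [subset_closure hb, inv_inv b ▸ inv_mem (subset_closure hb)]
      rw [hqs, QuotientGroup.mk_mul_of_mem _ hbS]
      exact ih q hq
  rintro _ ⟨s, ⟨w, hw, hs⟩, rfl⟩
  induction hw using closure_induction_right generalizing s with
  | one => simp [Q, List.suffix_nil.mp hs, ← one_eq_mk]
  | mul_right a _ b hb ih => exact step a b (Or.inl hb) ih s hs
  | mul_inv_cancel a _ b hb ih => exact step a b⁻¹ (Or.inr (Set.inv_mem_inv.mpr hb)) ih s hs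

theorem finite_suffixCosets_of_fg {H : Subgroup (FreeGroup α)} (h : H.FG) :
    (suffixCosets H H).Finite := by
  obtain ⟨S, rfl⟩ := h
  exact ((finite_suffixCosets _ (S.finite_toSet.union S.finite_toSet.inv)).insert _).subset
    (suffixCosets_closure_subset _)

theorem finite_letters_of_fg {H : Subgroup (FreeGroup α)} (h : H.FG) :
    (letters (H : Set (FreeGroup α))).Finite := by
  obtain ⟨S, rfl⟩ := h
  exact (finite_letters (S.finite_toSet.union S.finite_toSet.inv)).subset
    (letters_closure_subset _)

theorem fg_of_finite_suffixCosets_of_finite_letters {H : Subgroup (FreeGroup α)}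
    (hV : (suffixCosets H H).Finite) (hA : (letters (H : Set (FreeGroup α))).Finite) : H.FG := by
  obtain ⟨ρ, hρ, hρ1⟩ := QuotientGroup.exists_section_map_one H
  set gen : (FreeGroup α ⧸ H) × (α × Bool) → FreeGroup α :=
    fun e => (ρ (mk [e.2] • e.1))⁻¹ * (mk [e.2] * ρ e.1)
  have gen_mem (e) : gen e ∈ H := by
    rw [← QuotientGroup.eq, hρ, ← smul_eq_mul, ← MulAction.Quotient.smul_mk, hρ]
  have suffix_mem (s) (hs : s ∈ suffixes H) :
      (ρ (mk s : FreeGroup α))⁻¹ * mk s ∈ closure (gen '' suffixCosets H H ×ˢ letters H) := by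
    induction s with
    | nil => simp [← one_eq_mk, hρ1]
    | cons x t ih =>
      obtain ⟨w, hw, hxt⟩ := hs
      have ht : t ∈ suffixes H := ⟨w, hw, (List.suffix_cons x t).trans hxt⟩
      have hx : x ∈ letters H := ⟨w, hw, hxt.subset List.mem_cons_self⟩
      have hsplit : (ρ (mk (x :: t) : FreeGroup α))⁻¹ * mk (x :: t) =
          gen ((mk t : FreeGroup α), x) * ((ρ (mk t : FreeGroup α))⁻¹ * mk t) := by
        change (ρ (mk [x] • ((mk t : FreeGroup α) : FreeGroup α ⧸ H)))⁻¹ * (mk [x] * mk t) = _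
        simp only [gen]
        group
      rw [hsplit]
      exact mul_mem (subset_closure ⟨_, ⟨⟨t, ht, rfl⟩, hx⟩, rfl⟩) (ih ht)
  refine (fg_iff H).mpr ⟨_, le_antisymm ?_ fun w hw => ?_, (hV.prod hA).image gen⟩
  · exact (closure_le H).mpr fun _ ⟨e, _, he⟩ => he ▸ gen_mem e
  · have hw1 : (w : FreeGroup α ⧸ H) = ((1 : FreeGroup α) : FreeGroup α ⧸ H) :=
      QuotientGroup.eq.mpr (by simpa using hw)
    simpa [mk_toWord, hw1, hρ1] using suffix_mem w.toWord ⟨w, hw, List.suffix_refl _⟩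

theorem finite_suffixCosets_inf {H K : Subgroup (FreeGroup α)} (hH : (suffixCosets H H).Finite)
    (hK : (suffixCosets K K).Finite) : (suffixCosets (H ⊓ K) (H ⊓ K : Subgroup _)).Finite := by
  refine Set.Finite.of_finite_image ((hH.prod hK).subset ?_)
    (quotientMapOfLE_inf_injective H K).injOn
  rintro _ ⟨_, ⟨s, ⟨w, ⟨hwH, hwK⟩, hs⟩, rfl⟩, rfl⟩
  exact ⟨⟨s, ⟨w, hwH, hs⟩, rfl⟩, ⟨s, ⟨w, hwK, hs⟩, rfl⟩⟩

theorem fg_inf {H K : Subgroup (FreeGroup α)} (hH : H.FG) (hK : K.FG) : (H ⊓ K).FG :=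
  fg_of_finite_suffixCosets_of_finite_letters
    (finite_suffixCosets_inf (finite_suffixCosets_of_fg hH) (finite_suffixCosets_of_fg hK))
    ((finite_letters_of_fg hH).subset fun _ ⟨w, hw, hx⟩ => ⟨w, hw.1, hx⟩)

end FreeGroup

/-- **Howson's theorem.** Free groups are Howson: the intersection of
two finitely generated subgroups of a free group is finitely generated. -/
theorem free_groups_are_howson
    (F : Type) [Group F] [IsFreeGroup F]
    (H1 H2 : Subgroup F) (h1 : H1.FG) (h2 : H2.FG) :
    (H1 ⊓ H2).FG := by
  classical
  let e := IsFreeGroup.toFreeGroup F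
  have hmap : ((H1 ⊓ H2).map e.toMonoidHom).FG := by
    rw [map_inf _ _ _ e.injective]
    exact FreeGroup.fg_inf (h1.map _) (h2.map _)
  simpa [map_map] using hmap.map e.symm.toMonoidHom
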